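/- arXiv:2105.10085 — 7 statements merged into one kernel-verified Lean document; each statement's English description precedes it below -/
import Mathlib

section
/- For every real ξ with ξ > 1 or ξ < −1/8, the real phase function Θ_ξ is differentiable at every real x ≠ 0, and its derivative satisfies: Θ_ξ′(x) > 0 for all x ≠ 0 if ξ > 1, and Θ_ξ′(x) < 0 for all x ≠ 0 if ξ < −1/8. In particular, for ξ > 1 and for ξ < −1/8 the phase function has no stationary phase points on ℝ∖{0}. -/
private lemma phase_F_bounds (u : ℝ) :
    -(1/8) ≤ (1 - u ^ 2) / (u ^ 2 + 1) ^ 2 ∧ (1 - u ^ 2) / (u ^ 2 + 1) ^ 2 ≤ 1 := by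
  constructor
  · rw [le_div_iff₀ (by positivity)]
    nlinarith [sq_nonneg (u ^ 2 - 3)]
  · rw [div_le_one (by positivity)]
    nlinarith [sq_nonneg u, sq_nonneg (u ^ 2)]


/-- The real phase function `Θ_ξ(x) = √3 (x − 1/x)(ξ − 1/(x² − 1 + x⁻²))`. -/
noncomputable def phaseΘ (ξ : ℝ) : ℝ → ℝ :=
  fun x => Real.sqrt 3 * (x - 1 / x) * (ξ - 1 / (x ^ 2 - 1 + (1 / x) ^ 2))

/-- For `ξ > 1` or `ξ < −1/8`, the phase `Θ_ξ` is differentiable on `ℝ∖{0}`, its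
derivative is positive everywhere if `ξ > 1` and negative everywhere if `ξ < −1/8`;
in particular it has no stationary phase points on `ℝ∖{0}`. -/
theorem stmt_0 (ξ : ℝ) (hξ : ξ > 1 ∨ ξ < -(1 / 8)) :
    ∀ x : ℝ, x ≠ 0 →
      DifferentiableAt ℝ (phaseΘ ξ) x ∧
      (ξ > 1 → 0 < deriv (phaseΘ ξ) x) ∧
      (ξ < -(1 / 8) → deriv (phaseΘ ξ) x < 0) ∧
      deriv (phaseΘ ξ) x ≠ 0 := by
  intro x hx
  set u : ℝ := x - x⁻¹ with hu_def
  have hD : (0:ℝ) < u ^ 2 + 1 := by positivity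
  have hne : u ^ 2 + 1 ≠ 0 := ne_of_gt hD
  -- derivative of x - x⁻¹
  have hu : HasDerivAt (fun y : ℝ => y - y⁻¹) (1 + (x ^ 2)⁻¹) x := by
    have h := (hasDerivAt_id x).sub (hasDerivAt_inv hx)
    convert h using 1
    · rfl
    · rfl
    · rfl
    · ring
  have hinner : HasDerivAt (fun y : ℝ => ((y - y⁻¹) ^ 2 + 1)⁻¹)
      (-(↑2 * (x - x⁻¹) ^ (2-1) * (1 + (x ^ 2)⁻¹)) / ((x - x⁻¹) ^ 2 + 1) ^ 2) x :=
    ((hu.pow 2).add_const 1).inv hne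
  have hg : HasDerivAt (fun y : ℝ => Real.sqrt 3 * (y - y⁻¹) * (ξ - ((y - y⁻¹) ^ 2 + 1)⁻¹))
      (Real.sqrt 3 * (1 + (x ^ 2)⁻¹) * (ξ - (u ^ 2 + 1)⁻¹)
        + Real.sqrt 3 * u *
          (-(-(↑2 * (x - x⁻¹) ^ (2-1) * (1 + (x ^ 2)⁻¹)) / ((x - x⁻¹) ^ 2 + 1) ^ 2))) x :=
    (hu.const_mul (Real.sqrt 3)).mul (hinner.const_sub ξ)
  -- local equality of phaseΘ with g
  have heq : phaseΘ ξ =ᶠ[nhds x]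
      (fun y : ℝ => Real.sqrt 3 * (y - y⁻¹) * (ξ - ((y - y⁻¹) ^ 2 + 1)⁻¹)) := by
    filter_upwards [eventually_ne_nhds hx] with y hy
    have key : y ^ 2 - 1 + y⁻¹ ^ 2 = (y - y⁻¹) ^ 2 + 1 := by
      field_simp
      ring
    simp only [phaseΘ, one_div, key]
  have hdiff : DifferentiableAt ℝ (phaseΘ ξ) x :=
    hg.differentiableAt.congr_of_eventuallyEq heq
  have hderiv : deriv (phaseΘ ξ) x =
      Real.sqrt 3 * (1 + (x ^ 2)⁻¹) * (ξ - (1 - u ^ 2) / (u ^ 2 + 1) ^ 2) := by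
    rw [heq.deriv_eq, hg.deriv]
    rw [hu_def]
    field_simp
    norm_num
    field_simp
    ring
  -- bounds on F = (1 - u²)/(u² + 1)²
  set F : ℝ := (1 - u ^ 2) / (u ^ 2 + 1) ^ 2 with hF_def
  have hF1 : F ≤ 1 := (phase_F_bounds u).2
  have hF2 : -(1/8) ≤ F := (phase_F_bounds u).1
  have hs3 : (0:ℝ) < Real.sqrt 3 := Real.sqrt_pos.mpr (by norm_num)
  have hc : (0:ℝ) < 1 + (x ^ 2)⁻¹ := by positivity
  have hpos : ξ > 1 → 0 < deriv (phaseΘ ξ) x := by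
    intro h
    rw [hderiv]
    have : 0 < ξ - F := by linarith
    exact mul_pos (mul_pos hs3 hc) this
  have hneg : ξ < -(1/8) → deriv (phaseΘ ξ) x < 0 := by
    intro h
    rw [hderiv]
    have : ξ - F < 0 := by linarith
    exact mul_neg_of_pos_of_neg (mul_pos hs3 hc) this
  refine ⟨hdiff, hpos, hneg, ?_⟩
  rcases hξ with h | h
  · exact ne_of_gt (hpos h)
  · exact ne_of_lt (hneg h)
end

section
/- For every real ξ with 0 ≤ ξ < 1 there exists a real number ξ₁ > 1 such that the set of stationary phase points { x ∈ ℝ∖{0} : Θ_ξ′(x) = 0 } equals the four-element set { ξ₁, 1/ξ₁, −1/ξ₁, −ξ₁ }; these four points are distinct and, in decreasing order, are ξ₁ > 1/ξ₁ > −1/ξ₁ > −ξ₁. -/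
lemma my_deriv_eq (ξ x : ℝ) (hx : x ≠ 0) :
    deriv (phaseΘ ξ) x = Real.sqrt 3 * (1 + 1 / x ^ 2) *
      ((ξ * ((x - 1 / x) ^ 2 + 1) ^ 2 + (x - 1 / x) ^ 2 - 1) / ((x - 1 / x) ^ 2 + 1) ^ 2) := by
  have hx2 : x * (1 / x) = 1 := mul_one_div_cancel hx
  have hDpos : 0 < x ^ 2 - 1 + (1 / x) ^ 2 := by nlinarith [sq_nonneg (x - 1 / x)]
  have hDne : x ^ 2 - 1 + (x⁻¹) ^ 2 ≠ 0 := by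
    rw [← one_div]; exact ne_of_gt hDpos
  have hu : HasDerivAt (fun y : ℝ => y - y⁻¹) (1 - -(x ^ 2)⁻¹) x :=
    (hasDerivAt_id x).sub (hasDerivAt_inv hx)
  have hD : HasDerivAt (fun y : ℝ => y ^ 2 - 1 + (y⁻¹) ^ 2)
      (2 * x ^ 1 + 2 * x⁻¹ ^ 1 * -(x ^ 2)⁻¹) x :=
    (((hasDerivAt_pow 2 x).sub_const 1).add ((hasDerivAt_inv hx).pow 2))
  have hiD := hD.inv hDne
  have hfull := ((hu.const_mul (Real.sqrt 3)).mul (hiD.const_sub ξ))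
  have hfun : phaseΘ ξ = fun y : ℝ =>
      (Real.sqrt 3 * (y - y⁻¹)) * (ξ - (y ^ 2 - 1 + (y⁻¹) ^ 2)⁻¹) := by
    funext y; simp [phaseΘ, one_div]
  have hD1 : x ^ 2 - 1 + (1/x) ^ 2 = (x - 1/x)^2 + 1 := by field_simp; ring
  rw [hfun, show (fun y : ℝ => (Real.sqrt 3 * (y - y⁻¹)) * (ξ - (y ^ 2 - 1 + (y⁻¹) ^ 2)⁻¹)) =
      ((fun y : ℝ => Real.sqrt 3 * (y - y⁻¹)) * fun x => ξ - (fun y : ℝ => y ^ 2 - 1 + y⁻¹ ^ 2)⁻¹ x)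
      from rfl, hfull.deriv]
  simp only [Pi.inv_apply]
  simp only [← one_div, pow_one]
  rw [hD1]
  have e1 : (1:ℝ) - -(1/x^2) = 1 + 1/x^2 := by ring
  have e2 : 2*x + 2*(1/x)*-(1/x^2) = 2*(x - 1/x)*(1 + 1/x^2) := by
    field_simp; ring
  rw [e1, e2]
  set A := x - 1/x with hA
  set B := 1 + 1/x^2 with hB
  have hA1 : A^2 + 1 ≠ 0 := by positivity
  field_simp
  ring

/-- For `0 ≤ ξ < 1` there is `ξ₁ > 1` such that the stationary phase points of `Θ_ξ`
on `ℝ∖{0}` are exactly `ξ₁ > 1/ξ₁ > −1/ξ₁ > −ξ₁`. -/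
theorem stmt_1 (ξ : ℝ) (h0 : 0 ≤ ξ) (h1 : ξ < 1) :
    ∃ ξ₁ : ℝ, 1 < ξ₁ ∧
      {x : ℝ | x ≠ 0 ∧ deriv (phaseΘ ξ) x = 0}
        = ({ξ₁, 1 / ξ₁, -(1 / ξ₁), -ξ₁} : Set ℝ) ∧
      (1 / ξ₁ < ξ₁ ∧ -(1 / ξ₁) < 1 / ξ₁ ∧ -ξ₁ < -(1 / ξ₁)) := by
  -- find the positive root t₀ of ξ(t+1)² + t − 1
  have hcont : ContinuousOn (fun t : ℝ => ξ * (t + 1) ^ 2 + t - 1) (Set.Icc 0 1) :=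
    (by continuity : Continuous fun t : ℝ => ξ * (t + 1) ^ 2 + t - 1).continuousOn
  have hsub := intermediate_value_Ioc (by norm_num : (0:ℝ) ≤ 1) hcont
  have hmem : (0:ℝ) ∈ Set.Ioc (ξ * (0 + 1) ^ 2 + 0 - 1) (ξ * (1 + 1) ^ 2 + 1 - 1) := by
    constructor <;> [skip; skip] <;> norm_num <;> linarith
  obtain ⟨t₀, htmem, hft₀⟩ := hsub hmem
  have ht0 : 0 < t₀ := htmem.1
  set s := Real.sqrt t₀ with hs_def
  have hs : 0 < s := Real.sqrt_pos.mpr ht0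
  have hs2 : s ^ 2 = t₀ := Real.sq_sqrt ht0.le
  set r := Real.sqrt (s ^ 2 + 4) with hr_def
  have hr2 : r ^ 2 = s ^ 2 + 4 := Real.sq_sqrt (by positivity)
  have hr : 0 < r := Real.sqrt_pos.mpr (by positivity)
  refine ⟨(s + r) / 2, ?_, ?_, ?_⟩
  all_goals set ξ₁ := (s + r) / 2 with hξ₁_def
  case _ => nlinarith
  case _ =>
    have hx1 : 1 < ξ₁ := by nlinarith
    have hx1pos : 0 < ξ₁ := by linarith
    have hx1ne : ξ₁ ≠ 0 := hx1pos.ne'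
    have h1d : ξ₁ * (1 / ξ₁) = 1 := mul_one_div_cancel hx1ne
    have hq : ξ₁ ^ 2 = s * ξ₁ + 1 := by
      rw [hξ₁_def]; linear_combination hr2 / 4
    have husx : ξ₁ - 1 / ξ₁ = s := by
      field_simp
      linear_combination hq
    ext x
    simp only [Set.mem_setOf_eq, Set.mem_insert_iff, Set.mem_singleton_iff]
    have h3 : (0:ℝ) < Real.sqrt 3 := Real.sqrt_pos.mpr (by norm_num)
    constructor
    · rintro ⟨hx, hdx⟩
      rw [my_deriv_eq ξ x hx] at hdx
      have hB : (0:ℝ) < 1 + 1 / x ^ 2 := by positivity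
      have hden : (0:ℝ) < ((x - 1 / x) ^ 2 + 1) ^ 2 := by positivity
      have hE0 : ξ * ((x - 1 / x) ^ 2 + 1) ^ 2 + (x - 1 / x) ^ 2 - 1 = 0 := by
        rcases mul_eq_zero.mp hdx with h | h
        · rcases mul_eq_zero.mp h with h | h
          · exact absurd h h3.ne'
          · exact absurd h hB.ne'
        · rcases div_eq_zero_iff.mp h with h | h
          · exact h
          · exact absurd h hden.ne'
      have hfac : ((x - 1 / x) ^ 2 - t₀) * (ξ * ((x - 1 / x) ^ 2 + t₀ + 2) + 1) = 0 := by
        linear_combination hE0 - hft₀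
      have hpos2 : 0 < ξ * ((x - 1 / x) ^ 2 + t₀ + 2) + 1 := by
        nlinarith [sq_nonneg (x - 1 / x)]
      have hu2 : (x - 1 / x) ^ 2 = t₀ := by
        rcases mul_eq_zero.mp hfac with h | h
        · linarith [sub_eq_zero.mp h]
        · linarith
      have hq' : x ^ 2 = (x - 1 / x) * x + 1 := by field_simp; ring
      have hus : x - 1 / x = s ∨ x - 1 / x = -s := by
        have hh : (x - 1 / x - s) * (x - 1 / x + s) = 0 := by
          linear_combination hu2 - hs2
        rcases mul_eq_zero.mp hh with h | h
        · exact Or.inl (by linarith)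
        · exact Or.inr (by linarith)
      rcases hus with h | h
      · have hxq : x ^ 2 = s * x + 1 := by rw [← h]; exact hq'
        have key : (x - ξ₁) * (x + 1 / ξ₁) = 0 := by
          linear_combination hxq - x * husx - h1d
        rcases mul_eq_zero.mp key with hk | hk
        · exact Or.inl (sub_eq_zero.mp hk)
        · exact Or.inr (Or.inr (Or.inl (by linarith [eq_neg_of_add_eq_zero_left hk])))
      · have hxq : x ^ 2 = -s * x + 1 := by linear_combination hq' + x * h
        have key : (x + ξ₁) * (x - 1 / ξ₁) = 0 := by
          linear_combination hxq + x * husx - h1d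
        rcases mul_eq_zero.mp key with hk | hk
        · exact Or.inr (Or.inr (Or.inr (by linarith [eq_neg_of_add_eq_zero_left hk])))
        · exact Or.inr (Or.inl (sub_eq_zero.mp hk))
    · have hft : ξ * (t₀ + 1) ^ 2 + t₀ - 1 = 0 := hft₀
      have hval : ∀ y : ℝ, y ≠ 0 → (y - 1 / y) ^ 2 = t₀ → deriv (phaseΘ ξ) y = 0 := by
        intro y hy hy2
        rw [my_deriv_eq ξ y hy]
        have hnum : ξ * ((y - 1 / y) ^ 2 + 1) ^ 2 + (y - 1 / y) ^ 2 - 1 = 0 := by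
          rw [hy2]; linear_combination hft
        rw [hnum, zero_div, mul_zero]
      rintro (rfl | rfl | rfl | rfl)
      · exact ⟨hx1ne, hval ξ₁ hx1ne (by rw [husx]; exact hs2)⟩
      · refine ⟨one_div_ne_zero hx1ne, hval _ (one_div_ne_zero hx1ne) ?_⟩
        rw [one_div_one_div]
        have e : 1 / ξ₁ - ξ₁ = -s := by linarith
        rw [e, neg_sq]; exact hs2
      · refine ⟨neg_ne_zero.mpr (one_div_ne_zero hx1ne),
          hval _ (neg_ne_zero.mpr (one_div_ne_zero hx1ne)) ?_⟩
        rw [div_neg, one_div_one_div]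
        have e : -(1 / ξ₁) - -ξ₁ = s := by linarith
        rw [e]; exact hs2
      · refine ⟨neg_ne_zero.mpr hx1ne, hval _ (neg_ne_zero.mpr hx1ne) ?_⟩
        rw [div_neg]
        have e : -ξ₁ - -(1 / ξ₁) = -s := by linarith
        rw [e, neg_sq]; exact hs2
  case _ =>
    have hx1 : 1 < ξ₁ := by nlinarith
    have hx1pos : 0 < ξ₁ := by linarith
    have hd : 0 < 1 / ξ₁ := by positivity
    have hlt : 1 / ξ₁ < 1 := by
      rw [div_lt_one hx1pos]; exact hx1
    exact ⟨by linarith, by linarith, by linarith⟩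
end

section
/- Let ξ₁ be a real number with 1 < ξ₁ ≤ (1 + √5)/2, set k₁ = ξ₁ − 1/ξ₁ (so 0 < k₁ ≤ 1) and ξ = (1 − k₁²)/(1 + k₁²)² (so 0 ≤ ξ < 1). Then for every real x > 0: Θ_ξ′(x) < 0 if and only if 1/ξ₁ < x < ξ₁, and Θ_ξ′(x) > 0 if and only if 0 < x < 1/ξ₁ or x > ξ₁. -/
lemma phase_deriv (ξ x : ℝ) (hx : x ≠ 0) :
    deriv (phaseΘ ξ) x =
      Real.sqrt 3 * (1 + 1 / x ^ 2) *
        (ξ - (1 - (x - 1/x) ^ 2) / (1 + (x - 1/x) ^ 2) ^ 2) := by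
  have hD0 : x ^ 2 - 1 + (1 / x) ^ 2 ≠ 0 := by
    have h : x ^ 2 - 1 + (1 / x) ^ 2 = (x - 1/x) ^ 2 + 1 := by field_simp; ring
    rw [h]; positivity
  have hu : HasDerivAt (fun y : ℝ => y - 1 / y) (1 + 1 / x ^ 2) x := by
    have := (hasDerivAt_id x).sub (hasDerivAt_inv hx)
    simpa [Pi.sub_def, one_div, sub_neg_eq_add] using this
  have hD : HasDerivAt (fun y : ℝ => y ^ 2 - 1 + (1 / y) ^ 2)
      (2 * x - 2 / x ^ 3) x := by
    have h1 : HasDerivAt (fun y : ℝ => y ^ 2 - 1) (2 * x) x := by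
      simpa using (hasDerivAt_pow 2 x).sub_const 1
    have h2 : HasDerivAt (fun y : ℝ => (1 / y) ^ 2)
        (2 * x⁻¹ ^ 1 * (-(x ^ 2)⁻¹)) x := by
      simpa [Pi.pow_def, one_div] using (hasDerivAt_inv hx).pow 2
    have : HasDerivAt (fun y : ℝ => y ^ 2 - 1 + (1 / y) ^ 2) _ x := h1.add h2
    convert this using 1
    rw [pow_one]; field_simp
    ring
  have hinv : HasDerivAt (fun y : ℝ => ξ - 1 / (y ^ 2 - 1 + (1 / y) ^ 2))
      (0 - (-(2 * x - 2 / x ^ 3) / (x ^ 2 - 1 + (1 / x) ^ 2) ^ 2)) x := by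
    have := (hasDerivAt_const x ξ).sub (hD.inv hD0)
    simpa [Pi.sub_def, one_div] using this
  have hmul := ((hu.const_mul (Real.sqrt 3)).mul hinv)
  have hd : deriv (phaseΘ ξ) x =
      Real.sqrt 3 * (1 + 1 / x ^ 2) * (ξ - 1 / (x ^ 2 - 1 + (1 / x) ^ 2)) +
      Real.sqrt 3 * (x - 1 / x) *
        (0 - (-(2 * x - 2 / x ^ 3) / (x ^ 2 - 1 + (1 / x) ^ 2) ^ 2)) := by
    have : phaseΘ ξ = fun y : ℝ =>
        Real.sqrt 3 * (y - 1 / y) * (ξ - 1 / (y ^ 2 - 1 + (1 / y) ^ 2)) := rfl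
    rw [this]
    exact hmul.deriv
  have hA : (0:ℝ) < x ^ 4 - x ^ 2 + 1 := by nlinarith [sq_nonneg (x^2-1), sq_nonneg x]
  have e1 : x ^ 2 - 1 + (1 / x) ^ 2 = (x ^ 4 - x ^ 2 + 1) / x ^ 2 := by
    field_simp
  have e2 : 1 + (x - 1 / x) ^ 2 = (x ^ 4 - x ^ 2 + 1) / x ^ 2 := by
    field_simp; ring
  rw [hd, e1, e2]
  field_simp [show x ^ 2 * (x ^ 2 - 1) + 1 ≠ 0 by nlinarith]
  ring

set_option maxHeartbeats 1000000 in
/-- Sign table of `Θ_ξ′` on the positive real axis in the regime `0 ≤ ξ < 1`: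
for `1 < ξ₁ ≤ (1+√5)/2`, `k₁ = ξ₁ − 1/ξ₁` and `ξ = (1 − k₁²)/(1 + k₁²)²`, for
every `x > 0` one has `Θ_ξ′(x) < 0 ↔ 1/ξ₁ < x < ξ₁`, and
`Θ_ξ′(x) > 0 ↔ (0 < x < 1/ξ₁ or x > ξ₁)`. -/
theorem stmt_9 (ξ₁ : ℝ) (h1 : 1 < ξ₁) (h2 : ξ₁ ≤ (1 + Real.sqrt 5) / 2) :
    let k₁ : ℝ := ξ₁ - 1 / ξ₁
    let ξ : ℝ := (1 - k₁ ^ 2) / (1 + k₁ ^ 2) ^ 2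
    ∀ x : ℝ, 0 < x →
      (deriv (phaseΘ ξ) x < 0 ↔ (1 / ξ₁ < x ∧ x < ξ₁)) ∧
      (0 < deriv (phaseΘ ξ) x ↔ ((0 < x ∧ x < 1 / ξ₁) ∨ ξ₁ < x)) := by
  intro k₁ ξ x hx
  have hξ1 : (0:ℝ) < ξ₁ := by linarith
  have hξ1' : ξ₁ ≠ 0 := ne_of_gt hξ1
  have hx' : x ≠ 0 := ne_of_gt hx
  have hk : k₁ = ξ₁ - 1 / ξ₁ := rfl
  have hξdef : ξ = (1 - k₁ ^ 2) / (1 + k₁ ^ 2) ^ 2 := rfl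
  have hinv : 1 / ξ₁ * ξ₁ = 1 := by field_simp
  have hk0 : 0 < k₁ := by rw [hk]; nlinarith [hinv]
  -- k₁ ≤ 1 from ξ₁ ≤ golden ratio
  have h5 : Real.sqrt 5 ^ 2 = 5 := Real.sq_sqrt (by norm_num)
  have hs : (0:ℝ) ≤ Real.sqrt 5 := Real.sqrt_nonneg 5
  have hξsq : ξ₁ ^ 2 ≤ ξ₁ + 1 := by nlinarith
  have hk1 : k₁ ≤ 1 := by rw [hk]; nlinarith [hinv]
  set u : ℝ := x - 1 / x with hu
  have hd := phase_deriv ξ x hx'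
  -- key factorization of the second factor
  have h1u : (0:ℝ) < 1 + u ^ 2 := by positivity
  have h1k : (0:ℝ) < 1 + k₁ ^ 2 := by positivity
  have hfac : ξ - (1 - u ^ 2) / (1 + u ^ 2) ^ 2 =
      (u ^ 2 - k₁ ^ 2) * (3 + u ^ 2 + k₁ ^ 2 - u ^ 2 * k₁ ^ 2) /
        ((1 + k₁ ^ 2) ^ 2 * (1 + u ^ 2) ^ 2) := by
    rw [hξdef]
    field_simp
    ring
  -- u² - k₁² factorization
  have husub : u ^ 2 - k₁ ^ 2 =
      (x - ξ₁) * (x * ξ₁ - 1) * ((x + ξ₁) * (x * ξ₁ + 1)) / (x * ξ₁) ^ 2 := by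
    rw [hu, hk]
    field_simp
    ring
  -- positivity of everything except (x-ξ₁)(xξ₁-1)
  have hk2 : k₁ ^ 2 ≤ 1 := by nlinarith
  have hF : (0:ℝ) < 3 + u ^ 2 + k₁ ^ 2 - u ^ 2 * k₁ ^ 2 := by nlinarith [sq_nonneg u]
  have hs3 : (0:ℝ) < Real.sqrt 3 := Real.sqrt_pos.mpr (by norm_num)
  have hxx : (0:ℝ) < 1 + 1 / x ^ 2 := by positivity
  set C : ℝ :=
    Real.sqrt 3 * (1 + 1 / x ^ 2) * ((3 + u ^ 2 + k₁ ^ 2 - u ^ 2 * k₁ ^ 2) *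
      ((x + ξ₁) * (x * ξ₁ + 1)) / ((1 + k₁ ^ 2) ^ 2 * (1 + u ^ 2) ^ 2 * (x * ξ₁) ^ 2))
    with hC
  have hCpos : 0 < C := by
    rw [hC]
    have h1 : (0:ℝ) < x + ξ₁ := by linarith
    have h2' : (0:ℝ) < x * ξ₁ + 1 := by positivity
    positivity
  set P : ℝ := (x - ξ₁) * (x * ξ₁ - 1) with hP
  have hdCP : deriv (phaseΘ ξ) x = C * P := by
    rw [hd, hfac, husub, hC, hP]
    field_simp
  -- translate the inequalities on x
  have hlt : 1 / ξ₁ < x ↔ 1 < x * ξ₁ := by rw [div_lt_iff₀ hξ1]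
  have hgt : x < 1 / ξ₁ ↔ x * ξ₁ < 1 := by rw [lt_div_iff₀ hξ1]
  rw [hdCP]
  have hneg : C * P < 0 ↔ P < 0 := by
    constructor
    · intro h
      rcases mul_neg_iff.mp h with ⟨_, h2⟩ | ⟨h1, _⟩
      · exact h2
      · linarith
    · exact fun h => mul_neg_of_pos_of_neg hCpos h
  have hpos : 0 < C * P ↔ 0 < P := by
    constructor
    · intro h
      rcases mul_pos_iff.mp h with ⟨_, h2⟩ | ⟨h1, _⟩
      · exact h2
      · linarith
    · exact fun h => mul_pos hCpos h
  rw [hneg, hpos, hP]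
  clear hd hfac husub hdCP hneg hpos hC hCpos
  constructor
  · constructor
    · intro h
      rcases mul_neg_iff.mp h with ⟨ha, hb⟩ | ⟨ha, hb⟩
      · exfalso; nlinarith
      · exact ⟨hlt.mpr (by linarith), by linarith⟩
    · rintro ⟨ha, hb⟩
      have h1' : 1 < x * ξ₁ := hlt.mp ha
      apply mul_neg_of_neg_of_pos <;> linarith
  · constructor
    · intro h
      rcases mul_pos_iff.mp h with ⟨ha, hb⟩ | ⟨ha, hb⟩
      · right; linarith
      · left; exact ⟨hx, hgt.mpr (by linarith)⟩
    · intro h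
      rcases h with ⟨ha, hb⟩ | ha
      · have hb' : x * ξ₁ < 1 := hgt.mp hb
        have hxξ : x < ξ₁ := by nlinarith
        exact mul_pos_of_neg_of_neg (by linarith) (by linarith)
      · have h1' : 1 < x * ξ₁ := by nlinarith
        apply mul_pos <;> linarith
end

section
/- Let ξ be real with −1/8 < ξ < 0, and let ξ₁ > ξ₂ > 1 be real numbers with Θ_ξ′(ξ₁) = 0 and Θ_ξ′(ξ₂) = 0. Then for every real x > 0: Θ_ξ′(x) > 0 if and only if 1/ξ₁ < x < 1/ξ₂ or ξ₂ < x < ξ₁. -/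
lemma deriv_phase (ξ : ℝ) {x : ℝ} (hx : 0 < x) :
    deriv (phaseΘ ξ) x =
      Real.sqrt 3 * (1 + 1 / x ^ 2) *
        (ξ * (1 + (x - 1 / x) ^ 2) ^ 2 + (x - 1 / x) ^ 2 - 1) /
          (1 + (x - 1 / x) ^ 2) ^ 2 := by
  have hx0 : x ≠ 0 := ne_of_gt hx
  have hDeq : x ^ 2 - 1 + (1 / x) ^ 2 = (x - 1 / x) ^ 2 + 1 := by
    field_simp; ring
  have hDpos : 0 < x ^ 2 - 1 + (1 / x) ^ 2 := by rw [hDeq]; positivity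
  have hD : x ^ 2 - 1 + (1 / x) ^ 2 ≠ 0 := ne_of_gt hDpos
  have h1 : HasDerivAt (fun y : ℝ => y - 1 / y) (1 + 1 / x ^ 2) x := by
    have := (hasDerivAt_id x).fun_sub (hasDerivAt_inv hx0)
    simp only [one_div]
    refine this.congr_deriv ?_
    ring
  have h2 : HasDerivAt (fun y : ℝ => y ^ 2 - 1 + (1 / y) ^ 2)
      (2 * x + 2 * (1 / x) * (-(x ^ 2)⁻¹)) x := by
    have ha : HasDerivAt (fun y : ℝ => y ^ 2 - 1) (2 * x) x := by
      simpa using (hasDerivAt_pow 2 x).sub_const 1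
    have hb : HasDerivAt (fun y : ℝ => (1 / y) ^ 2) (2 * (1 / x) * (-(x ^ 2)⁻¹)) x := by
      have := (hasDerivAt_inv hx0).fun_pow 2
      simpa [one_div] using this
    exact ha.add hb
  have h3 : HasDerivAt (fun y : ℝ => ξ - 1 / (y ^ 2 - 1 + (1 / y) ^ 2))
      ((2 * x + 2 * (1 / x) * (-(x ^ 2)⁻¹)) / (x ^ 2 - 1 + (1 / x) ^ 2) ^ 2) x := by
    have h := (hasDerivAt_const x ξ).fun_sub (h2.inv hD)
    have heq : (fun y : ℝ => ξ - 1 / (y ^ 2 - 1 + (1 / y) ^ 2)) =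
        fun y : ℝ => ξ - (y ^ 2 - 1 + (1 / y) ^ 2)⁻¹ := by
      funext y; rw [one_div]
    rw [heq]
    refine h.congr_deriv ?_
    ring
  have h4 : HasDerivAt (phaseΘ ξ)
      (Real.sqrt 3 * (1 + 1 / x ^ 2) * (ξ - 1 / (x ^ 2 - 1 + (1 / x) ^ 2)) +
        Real.sqrt 3 * (x - 1 / x) *
          ((2 * x + 2 * (1 / x) * (-(x ^ 2)⁻¹)) / (x ^ 2 - 1 + (1 / x) ^ 2) ^ 2)) x := by
    have := ((h1.const_mul (Real.sqrt 3)).fun_mul h3)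
    exact this
  rw [h4.deriv]
  have hD2 : ((x - 1/x)^2 + 1) ≠ 0 := by positivity
  rw [hDeq]
  field_simp
  ring

lemma u_lt_u {a b : ℝ} (ha : 0 < a) (h : a < b) :
    a - 1 / a < b - 1 / b :=
  sub_lt_sub h (one_div_lt_one_div_of_lt ha h)

lemma u_lt_u_iff {a b : ℝ} (ha : 0 < a) (hb : 0 < b) :
    a - 1 / a < b - 1 / b ↔ a < b := by
  constructor
  · intro h
    by_contra hc
    push_neg at hc
    rcases hc.lt_or_eq with hl | he
    · exact absurd (u_lt_u hb hl) (by linarith)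
    · rw [he] at h; exact lt_irrefl _ h
  · exact u_lt_u ha

lemma phSign_pos (ξ : ℝ) {x : ℝ} (hx : 0 < x) :
    0 < deriv (phaseΘ ξ) x ↔
      0 < ξ * (1 + (x - 1 / x) ^ 2) ^ 2 + (x - 1 / x) ^ 2 - 1 := by
  rw [deriv_phase ξ hx]
  have hc : 0 < Real.sqrt 3 * (1 + 1 / x ^ 2) := by positivity
  have hd : (0:ℝ) < (1 + (x - 1 / x) ^ 2) ^ 2 := by positivity
  rw [div_pos_iff]
  constructor
  · rintro (⟨h, _⟩ | ⟨_, h⟩)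
    · nlinarith
    · nlinarith
  · intro hN; exact Or.inl ⟨mul_pos hc hN, hd⟩

lemma phSign_zero (ξ : ℝ) {x : ℝ} (hx : 0 < x)
    (h : deriv (phaseΘ ξ) x = 0) :
    ξ * (1 + (x - 1 / x) ^ 2) ^ 2 + (x - 1 / x) ^ 2 - 1 = 0 := by
  rw [deriv_phase ξ hx] at h
  have hc : 0 < Real.sqrt 3 * (1 + 1 / x ^ 2) := by positivity
  have hd : (0:ℝ) < (1 + (x - 1 / x) ^ 2) ^ 2 := by positivity
  rcases div_eq_zero_iff.mp h with h' | h'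
  · rcases mul_eq_zero.mp h' with h'' | h''
    · exact absurd h'' (ne_of_gt hc)
    · exact h''
  · exact absurd h' (ne_of_gt hd)


set_option maxHeartbeats 1000000 in
/-- Sign table of `Θ_ξ′` on the positive real axis in the regime `−1/8 < ξ < 0`:
if `ξ₁ > ξ₂ > 1` are stationary phase points of `Θ_ξ`, then for every `x > 0` one has
`Θ_ξ′(x) > 0 ↔ (1/ξ₁ < x < 1/ξ₂ or ξ₂ < x < ξ₁)`. -/
theorem stmt_10 (ξ ξ₁ ξ₂ : ℝ) (hξ0 : -(1 / 8) < ξ) (hξ1 : ξ < 0)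
    (h12 : ξ₂ < ξ₁) (h2 : 1 < ξ₂)
    (hc1 : deriv (phaseΘ ξ) ξ₁ = 0) (hc2 : deriv (phaseΘ ξ) ξ₂ = 0) :
    ∀ x : ℝ, 0 < x →
      (0 < deriv (phaseΘ ξ) x ↔
        ((1 / ξ₁ < x ∧ x < 1 / ξ₂) ∨ (ξ₂ < x ∧ x < ξ₁))) := by
  have h2pos : (0:ℝ) < ξ₂ := lt_trans one_pos h2
  have h1pos : (0:ℝ) < ξ₁ := lt_trans h2pos h12
  have h1gt1 : 1 < ξ₁ := lt_trans h2 h12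
  obtain ⟨u1, hu1def⟩ : ∃ u1 : ℝ, u1 = ξ₁ - 1 / ξ₁ := ⟨_, rfl⟩
  obtain ⟨u2, hu2def⟩ : ∃ u2 : ℝ, u2 = ξ₂ - 1 / ξ₂ := ⟨_, rfl⟩
  obtain ⟨t1, ht1def⟩ : ∃ t1 : ℝ, t1 = u1 ^ 2 := ⟨_, rfl⟩
  obtain ⟨t2, ht2def⟩ : ∃ t2 : ℝ, t2 = u2 ^ 2 := ⟨_, rfl⟩
  have hinv2lt : 1 / ξ₂ < 1 := by rw [div_lt_one h2pos]; exact h2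
  have hinv1lt : 1 / ξ₁ < 1 := by rw [div_lt_one h1pos]; exact h1gt1
  have hu2pos : 0 < u2 := by rw [hu2def]; linarith
  have hu12 : u2 < u1 := by rw [hu1def, hu2def]; exact u_lt_u h2pos h12
  have hu1pos : 0 < u1 := lt_trans hu2pos hu12
  have ht12 : t2 < t1 := by rw [ht1def, ht2def]; nlinarith
  have hq1 : ξ * (1 + t1) ^ 2 + t1 - 1 = 0 := by
    rw [ht1def, hu1def]; exact phSign_zero ξ h1pos hc1
  have hq2 : ξ * (1 + t2) ^ 2 + t2 - 1 = 0 := by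
    rw [ht2def, hu2def]; exact phSign_zero ξ h2pos hc2
  have hne : t1 - t2 ≠ 0 := sub_ne_zero.mpr (ne_of_gt ht12)
  have hs : ξ * (t1 + t2 + 2) * (t1 - t2) = (-1) * (t1 - t2) := by
    linear_combination hq1 - hq2
  have hs' : ξ * (t1 + t2 + 2) = -1 := mul_right_cancel₀ hne hs
  have hp : ξ * t1 * t2 = ξ - 1 := by linear_combination t1 * hs' - hq1
  have hfac : ∀ s : ℝ, ξ * (1 + s) ^ 2 + s - 1 = ξ * (s - t1) * (s - t2) := by
    intro s; linear_combination s * hs' - hp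
  have hinv1pos : 0 < 1 / ξ₁ := by positivity
  have hinv2pos : 0 < 1 / ξ₂ := by positivity
  have hinvlt : 1 / ξ₁ < 1 / ξ₂ := one_div_lt_one_div_of_lt h2pos h12
  have hU1 : 1 / ξ₁ - 1 / (1 / ξ₁) = -u1 := by
    rw [one_div_one_div, hu1def]; ring
  have hU2 : 1 / ξ₂ - 1 / (1 / ξ₂) = -u2 := by
    rw [one_div_one_div, hu2def]; ring
  intro x hx
  rw [phSign_pos ξ hx]
  obtain ⟨ux, huxdef⟩ : ∃ ux : ℝ, ux = x - 1 / x := ⟨_, rfl⟩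
  rw [← huxdef, hfac (ux ^ 2)]
  have hAB : ∀ h : 0 < ξ * (ux ^ 2 - t1) * (ux ^ 2 - t2),
      (ux ^ 2 - t1) * (ux ^ 2 - t2) < 0 := by
    intro h; nlinarith
  have step1 : 0 < ξ * (ux ^ 2 - t1) * (ux ^ 2 - t2) ↔
      t2 < ux ^ 2 ∧ ux ^ 2 < t1 := by
    constructor
    · intro h
      have hab := hAB h
      constructor <;> nlinarith
    · rintro ⟨ha, hb⟩
      have he : ξ * (ux ^ 2 - t1) * (ux ^ 2 - t2) =
          ξ * ((ux ^ 2 - t1) * (ux ^ 2 - t2)) := by ring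
      rw [he]
      exact mul_pos_of_neg_of_neg hξ1
        (mul_neg_of_neg_of_pos (by linarith) (by linarith))
  rw [step1]
  have step2 : ux ^ 2 < t1 ↔ -u1 < ux ∧ ux < u1 := by
    rw [ht1def]
    constructor
    · intro h; constructor <;> nlinarith
    · rintro ⟨ha, hb⟩; nlinarith
  have step3 : t2 < ux ^ 2 ↔ ux < -u2 ∨ u2 < ux := by
    rw [ht2def]
    constructor
    · intro h
      rcases lt_or_ge ux 0 with hl | hl
      · left; nlinarith
      · right; nlinarith
    · rintro (h | h) <;> nlinarith
  rw [step2, step3]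
  have e1 : (-u1 < ux ↔ 1 / ξ₁ < x) := by
    rw [← hU1, huxdef]; exact u_lt_u_iff hinv1pos hx
  have e2 : (ux < u1 ↔ x < ξ₁) := by
    rw [huxdef, hu1def]; exact u_lt_u_iff hx h1pos
  have e3 : (ux < -u2 ↔ x < 1 / ξ₂) := by
    rw [← hU2, huxdef]; exact u_lt_u_iff hx hinv2pos
  have e4 : (u2 < ux ↔ ξ₂ < x) := by
    rw [huxdef, hu2def]; exact u_lt_u_iff h2pos hx
  rw [e1, e2, e3, e4]
  constructor
  · rintro ⟨h3 | h3, h1a, h1b⟩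
    · exact Or.inl ⟨h1a, h3⟩
    · exact Or.inr ⟨h3, h1b⟩
  · rintro (⟨ha, hb⟩ | ⟨ha, hb⟩)
    · exact ⟨Or.inl hb, ha, by linarith⟩
    · exact ⟨Or.inr ha, by linarith, hb⟩
end

section
/- Let p, q > 1 be real numbers with 1/p + 1/q = 1. Then for all real c > 0, t > 0 and y > 0, ∫₀^y v^{1/p − 1/2} (y − v)^{1/q − 1} e^{−c t v²} dv ≤ ( ∫₀^1 w^{1/p − 1} (1 − w)^{1/q − 1} dw ) · (c t)^{−1/4}; in particular the bound is uniform in y > 0. -/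
open MeasureTheory

lemma exp_neg_le_rpow {s : ℝ} (hs : 0 < s) : Real.exp (-s) ≤ s ^ (-(1/4) : ℝ) := by
  have h1 : s ^ ((1:ℝ)/4) ≤ Real.exp s := by
    calc s ^ ((1:ℝ)/4) ≤ (Real.exp s) ^ ((1:ℝ)/4) :=
          Real.rpow_le_rpow hs.le (by linarith [Real.add_one_le_exp s]) (by norm_num)
      _ = Real.exp (s * (1/4)) := (Real.exp_mul s (1/4)).symm
      _ ≤ Real.exp s := Real.exp_le_exp.2 (by linarith)
  rw [Real.exp_neg, Real.rpow_neg hs.le]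
  exact inv_anti₀ (Real.rpow_pos_of_pos hs _) h1

lemma beta_integrable {a b : ℝ} (ha : -1 < a) (hb : -1 < b) {y : ℝ} (hy : 0 < y) :
    IntegrableOn (fun v => v ^ a * (y - v) ^ b) (Set.Ioo 0 y) := by
  have hmeas : AEStronglyMeasurable (fun v : ℝ => v ^ a * (y - v) ^ b) volume := by
    apply Measurable.aestronglyMeasurable
    fun_prop
  have h2 : (0:ℝ) < y / 2 := by linarith
  -- piece 1 : on Ioc 0 (y/2)
  have hC : ∀ x : ℝ, y/2 ≤ x → x ≤ y → x ^ b ≤ max ((y/2) ^ b) (y ^ b) := by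
    intro x hx1 hx2
    rcases le_or_gt 0 b with hb0 | hb0
    · exact le_max_of_le_right (Real.rpow_le_rpow (by linarith) hx2 hb0)
    · exact le_max_of_le_left (Real.rpow_le_rpow_of_nonpos h2 hx1 hb0.le)
  have hint1 : IntegrableOn (fun v : ℝ => max ((y/2) ^ b) (y ^ b) * v ^ a)
      (Set.Ioc 0 (y/2)) := by
    have := (intervalIntegral.intervalIntegrable_rpow' (a := 0) (b := y/2) ha).const_mul
      (max ((y/2) ^ b) (y ^ b))
    rwa [intervalIntegrable_iff_integrableOn_Ioc_of_le h2.le] at this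
  have hp1 : IntegrableOn (fun v => v ^ a * (y - v) ^ b) (Set.Ioc 0 (y/2)) := by
    refine Integrable.mono hint1 (hmeas.restrict) ?_
    filter_upwards [ae_restrict_mem measurableSet_Ioc] with v hv
    have hv0 : 0 < v := hv.1
    have hyv1 : y/2 ≤ y - v := by linarith [hv.2]
    have hyv2 : y - v ≤ y := by linarith
    have hfa : 0 ≤ v ^ a := (Real.rpow_pos_of_pos hv0 a).le
    rw [Real.norm_eq_abs, Real.norm_eq_abs,
      abs_of_nonneg (mul_nonneg hfa (Real.rpow_nonneg (by linarith) b)),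
      abs_of_nonneg (mul_nonneg (le_max_iff.2 (Or.inr (Real.rpow_nonneg hy.le b))) hfa)]
    rw [mul_comm (max _ _)]
    exact mul_le_mul_of_nonneg_left (hC _ hyv1 hyv2) hfa
  -- piece 2 : on Ioo (y/2) y
  have hD : ∀ x : ℝ, y/2 ≤ x → x ≤ y → x ^ a ≤ max ((y/2) ^ a) (y ^ a) := by
    intro x hx1 hx2
    rcases le_or_gt 0 a with ha0 | ha0
    · exact le_max_of_le_right (Real.rpow_le_rpow (by linarith) hx2 ha0)
    · exact le_max_of_le_left (Real.rpow_le_rpow_of_nonpos h2 hx1 ha0.le)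
  have hint2 : IntegrableOn (fun v : ℝ => max ((y/2) ^ a) (y ^ a) * (y - v) ^ b)
      (Set.Ioc (y/2) y) := by
    have h0 := (intervalIntegral.intervalIntegrable_rpow' (a := 0) (b := y/2) hb)
    have h1 := ((h0.comp_sub_left y).const_mul (max ((y/2) ^ a) (y ^ a))).symm
    rw [sub_zero, show y - y/2 = y/2 by ring] at h1
    rwa [intervalIntegrable_iff_integrableOn_Ioc_of_le (by linarith)] at h1
  have hp2 : IntegrableOn (fun v => v ^ a * (y - v) ^ b) (Set.Ioo (y/2) y) := by
    refine Integrable.mono (hint2.mono_set Set.Ioo_subset_Ioc_self) (hmeas.restrict) ?_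
    filter_upwards [ae_restrict_mem measurableSet_Ioo] with v hv
    have hv0 : 0 < v := lt_trans h2 hv.1
    have hyv : 0 < y - v := by linarith [hv.2]
    have hfb : 0 ≤ (y - v) ^ b := (Real.rpow_pos_of_pos hyv b).le
    rw [Real.norm_eq_abs, Real.norm_eq_abs,
      abs_of_nonneg (mul_nonneg (Real.rpow_nonneg hv0.le a) hfb),
      abs_of_nonneg (mul_nonneg (le_max_iff.2 (Or.inr (Real.rpow_nonneg hy.le a))) hfb)]
    exact mul_le_mul_of_nonneg_right (hD _ hv.1.le hv.2.le) hfb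
  exact (hp1.union hp2).mono_set (by
    intro x hx
    rcases le_or_gt x (y/2) with h | h
    · exact Or.inl ⟨hx.1, h⟩
    · exact Or.inr ⟨h, hx.2⟩)

lemma beta_scale {a b : ℝ} {y : ℝ} (hy : 0 < y) (hab : a + b = -1) :
    ∫ v in Set.Ioo (0:ℝ) y, v ^ a * (y - v) ^ b
      = ∫ w in Set.Ioo (0:ℝ) 1, w ^ a * (1 - w) ^ b := by
  have key := intervalIntegral.integral_comp_mul_left
    (fun v => v ^ a * (y - v) ^ b) (c := y) hy.ne' (a := 0) (b := 1)
  rw [mul_zero, mul_one] at key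
  have h1 : (∫ w in (0:ℝ)..1, (y * w) ^ a * (y - y * w) ^ b)
      = y⁻¹ * ∫ w in (0:ℝ)..1, w ^ a * (1 - w) ^ b := by
    rw [intervalIntegral.integral_of_le zero_le_one,
      intervalIntegral.integral_of_le zero_le_one,
      integral_Ioc_eq_integral_Ioo, integral_Ioc_eq_integral_Ioo,
      ← integral_const_mul]
    refine setIntegral_congr_fun measurableSet_Ioo (fun w hw => ?_)
    have hw0 : 0 < w := hw.1
    have hw1 : 0 < 1 - w := by linarith [hw.2]
    have : y - y * w = y * (1 - w) := by ring
    rw [this, Real.mul_rpow hy.le hw0.le, Real.mul_rpow hy.le hw1.le]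
    rw [show y ^ a * w ^ a * (y ^ b * (1 - w) ^ b)
        = (y ^ a * y ^ b) * (w ^ a * (1 - w) ^ b) by ring,
      ← Real.rpow_add hy, hab, Real.rpow_neg_one]
  rw [h1, smul_eq_mul] at key
  have key2 := mul_left_cancel₀ (inv_ne_zero hy.ne') key
  rw [intervalIntegral.integral_of_le hy.le, integral_Ioc_eq_integral_Ioo] at key2
  rw [← key2, intervalIntegral.integral_of_le zero_le_one, integral_Ioc_eq_integral_Ioo]

/-- Beta-function bound
`∫₀^y v^{1/p−1/2}(y−v)^{1/q−1} e^{−ctv²} dv ≤ B(1/p, 1/q) (ct)^{−1/4}` for conjugate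
exponents `p, q > 1`, uniformly in `y > 0`. -/
theorem stmt_16 (p q : ℝ) (hp : 1 < p) (hq : 1 < q) (hpq : 1 / p + 1 / q = 1) :
    ∀ c t y : ℝ, 0 < c → 0 < t → 0 < y →
      (∫ v in Set.Ioo (0 : ℝ) y,
          v ^ (1 / p - 1 / 2) * (y - v) ^ (1 / q - 1) * Real.exp (-(c * t * v ^ 2)))
        ≤ (∫ w in Set.Ioo (0 : ℝ) 1, w ^ (1 / p - 1) * (1 - w) ^ (1 / q - 1)) *
            (c * t) ^ (-(1 : ℝ) / 4) := by
  intro c t y hc ht hy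
  have hp0 : (0:ℝ) < 1 / p := by positivity
  have hp1 : 1 / p < 1 := by
    rw [div_lt_one (by linarith)]; exact hp
  have hq0 : (0:ℝ) < 1 / q := by positivity
  have ha : (-1:ℝ) < 1 / p - 1 := by linarith
  have hb : (-1:ℝ) < 1 / q - 1 := by linarith
  have hct : 0 < c * t := mul_pos hc ht
  have hA : 0 < (c * t) ^ (-(1/4) : ℝ) := Real.rpow_pos_of_pos hct _
  have hG : IntegrableOn (fun v => v ^ (1/p - 1) * (y - v) ^ (1/q - 1)) (Set.Ioo 0 y) :=
    beta_integrable ha hb hy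
  have step1 : (∫ v in Set.Ioo (0 : ℝ) y,
          v ^ (1 / p - 1 / 2) * (y - v) ^ (1 / q - 1) * Real.exp (-(c * t * v ^ 2)))
      ≤ ∫ v in Set.Ioo (0:ℝ) y,
          (c * t) ^ (-(1/4) : ℝ) * (v ^ (1/p - 1) * (y - v) ^ (1/q - 1)) := by
    refine integral_mono_of_nonneg ?_ (hG.const_mul _) ?_
    · filter_upwards [ae_restrict_mem measurableSet_Ioo] with v hv
      have hv0 : 0 < v := hv.1
      have hyv : 0 < y - v := by linarith [hv.2]
      positivity
    · filter_upwards [ae_restrict_mem measurableSet_Ioo] with v hv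
      have hv0 : 0 < v := hv.1
      have hyv : 0 < y - v := by linarith [hv.2]
      have hs : 0 < c * t * v ^ 2 := by positivity
      have hexp : Real.exp (-(c * t * v ^ 2))
          ≤ (c * t) ^ (-(1/4) : ℝ) * v ^ (-(1/2) : ℝ) := by
        calc Real.exp (-(c * t * v ^ 2)) ≤ (c * t * v ^ 2) ^ (-(1/4) : ℝ) :=
              exp_neg_le_rpow hs
          _ = (c * t) ^ (-(1/4) : ℝ) * (v ^ 2) ^ (-(1/4) : ℝ) :=
              Real.mul_rpow hct.le (by positivity)
          _ = (c * t) ^ (-(1/4) : ℝ) * v ^ (-(1/2) : ℝ) := by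
              rw [← Real.rpow_natCast v 2, ← Real.rpow_mul hv0.le]
              norm_num
      calc v ^ (1/p - 1/2) * (y - v) ^ (1/q - 1) * Real.exp (-(c * t * v ^ 2))
          ≤ v ^ (1/p - 1/2) * (y - v) ^ (1/q - 1)
              * ((c * t) ^ (-(1/4) : ℝ) * v ^ (-(1/2) : ℝ)) := by
            refine mul_le_mul_of_nonneg_left hexp (by positivity)
        _ = (c * t) ^ (-(1/4) : ℝ)
              * (v ^ (1/p - 1/2) * v ^ (-(1/2) : ℝ) * (y - v) ^ (1/q - 1)) := by ring
        _ = (c * t) ^ (-(1/4) : ℝ) * (v ^ (1/p - 1) * (y - v) ^ (1/q - 1)) := by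
            rw [← Real.rpow_add hv0, show 1/p - 1/2 + -(1/2) = 1/p - 1 by ring]
  have step2 : (∫ v in Set.Ioo (0:ℝ) y,
          (c * t) ^ (-(1/4) : ℝ) * (v ^ (1/p - 1) * (y - v) ^ (1/q - 1)))
      = (∫ w in Set.Ioo (0:ℝ) 1, w ^ (1/p - 1) * (1 - w) ^ (1/q - 1))
          * (c * t) ^ (-(1/4) : ℝ) := by
    rw [integral_const_mul, beta_scale hy (by linarith), mul_comm]
  rw [show (-(1:ℝ))/4 = -(1/4) by norm_num]
  calc _ ≤ _ := step1
    _ = _ := step2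
end

section
/- For every real ρ ∈ (0, 1) there exists a constant C > 0 depending only on ρ such that for all real c > 0, t > 0 and every κ ≥ 0, ∫₀^{1/4} e^{−c t v} ( ∫_{κ v}^∞ (u² + v²)^{−(1+ρ)/2} · ((u − √3/2)² + (v − 1/2)²)^{−(1−ρ)/2} du ) dv ≤ C (c t)^{ρ − 1}. -/
open MeasureTheory

private lemma sq_rpow_aux {x : ℝ} (hx : 0 ≤ x) (e : ℝ) : (x ^ 2) ^ e = x ^ (2 * e) := by
  rw [← Real.rpow_two, ← Real.rpow_mul hx]

/-- The inner integrand is bounded by `16^((1-ρ)/2) * (u^2+v^2)^(-(1+ρ)/2)` for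
`0 < v < 1/4`. -/
private lemma inner_pt_bound {ρ : ℝ} (hρ1 : ρ < 1) {v : ℝ} (hv : v ∈ Set.Ioo (0:ℝ) (1/4))
    (u : ℝ) :
    (u ^ 2 + v ^ 2) ^ (-(1 + ρ) / 2) *
        ((u - Real.sqrt 3 / 2) ^ 2 + (v - 1 / 2) ^ 2) ^ (-(1 - ρ) / 2)
      ≤ (u ^ 2 + v ^ 2) ^ (-(1 + ρ) / 2) * (16 : ℝ) ^ ((1 - ρ) / 2) := by
  have h1 : (0:ℝ) ≤ (u ^ 2 + v ^ 2) ^ (-(1 + ρ) / 2) := by positivity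
  refine mul_le_mul_of_nonneg_left ?_ h1
  have hbase : (1/16 : ℝ) ≤ (u - Real.sqrt 3 / 2) ^ 2 + (v - 1 / 2) ^ 2 := by
    have h2 : (1/4 : ℝ) ≤ |v - 1/2| := by
      rw [abs_sub_comm, abs_of_nonneg (by linarith [hv.2] : (0:ℝ) ≤ 1/2 - v)]
      linarith [hv.2]
    have h3 : (1/4 : ℝ)^2 ≤ (v - 1/2)^2 := by
      rw [← sq_abs (v - 1/2)]
      exact pow_le_pow_left₀ (by norm_num) h2 2
    nlinarith [sq_nonneg (u - Real.sqrt 3 / 2)]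
  calc ((u - Real.sqrt 3 / 2) ^ 2 + (v - 1 / 2) ^ 2) ^ (-(1 - ρ) / 2)
      ≤ (1/16 : ℝ) ^ (-(1 - ρ) / 2) :=
        Real.rpow_le_rpow_of_nonpos (by norm_num) hbase (by linarith)
    _ = (16 : ℝ) ^ ((1 - ρ) / 2) := by
        rw [one_div, Real.inv_rpow (by norm_num), ← Real.rpow_neg (by norm_num), neg_div,
          neg_neg]

/-- Double-integral estimate near the reconstruction point `e^{iπ/6} = √3/2 + i/2`:
for `0 < ρ < 1` there is `C > 0` such that for all `c, t > 0` and `κ ≥ 0`,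
`∫₀^{1/4} e^{−ctv} ∫_{κv}^∞ (u²+v²)^{−(1+ρ)/2} ((u−√3/2)²+(v−1/2)²)^{−(1−ρ)/2} du dv
  ≤ C (ct)^{ρ−1}`. -/
theorem stmt_18 (ρ : ℝ) (hρ0 : 0 < ρ) (hρ1 : ρ < 1) :
    ∃ C : ℝ, 0 < C ∧ ∀ c t κ : ℝ, 0 < c → 0 < t → 0 ≤ κ →
      (∫ v in Set.Ioo (0 : ℝ) (1 / 4), Real.exp (-(c * t * v)) *
          ∫ u in Set.Ioi (κ * v),
            (u ^ 2 + v ^ 2) ^ (-(1 + ρ) / 2) *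
              ((u - Real.sqrt 3 / 2) ^ 2 + (v - 1 / 2) ^ 2) ^ (-(1 - ρ) / 2))
        ≤ C * (c * t) ^ (ρ - 1) := by
  set K : ℝ := (16 : ℝ) ^ ((1 - ρ) / 2) * (1 + 1/ρ) with hK
  have hρinv : (0:ℝ) < 1 + 1/ρ := by
    have := one_div_pos.mpr hρ0; linarith
  have hKpos : 0 < K := mul_pos (Real.rpow_pos_of_pos (by norm_num) _) hρinv
  refine ⟨K * Real.Gamma (1 - ρ),
    mul_pos hKpos (Real.Gamma_pos_of_pos (by linarith)), ?_⟩
  intro c t κ hc ht hκ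
  set b : ℝ := c * t with hb
  have hbpos : 0 < b := mul_pos hc ht
  -- Step 1: bound the inner integral for each v ∈ (0, 1/4).
  have inner_bound : ∀ v ∈ Set.Ioo (0:ℝ) (1/4),
      (∫ u in Set.Ioi (κ * v),
          (u ^ 2 + v ^ 2) ^ (-(1 + ρ) / 2) *
            ((u - Real.sqrt 3 / 2) ^ 2 + (v - 1 / 2) ^ 2) ^ (-(1 - ρ) / 2))
        ≤ K * v ^ (-ρ) := by
    intro v hv
    have hv0 : 0 < v := hv.1
    set base : ℝ → ℝ := fun u => (u ^ 2 + v ^ 2) ^ (-(1 + ρ) / 2) with hbase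
    have hbase_cont : Continuous base := by
      apply Continuous.rpow_const (by continuity)
      intro x; left; positivity
    -- integrability of `base` on `Ioi 0`
    have hint_Ioc : IntegrableOn base (Set.Ioc 0 v) := hbase_cont.integrableOn_Ioc
    have hint_Ioi : IntegrableOn base (Set.Ioi v) := by
      refine Integrable.mono' ((integrableOn_Ioi_rpow_of_lt (a := -(1+ρ))
        (by linarith) hv0)) (hbase_cont.aestronglyMeasurable.restrict) ?_
      filter_upwards [ae_restrict_mem measurableSet_Ioi] with u hu
      have hu0 : 0 < u := hv0.trans hu
      rw [Real.norm_eq_abs, abs_of_nonneg (by positivity)]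
      calc base u ≤ (u^2) ^ (-(1+ρ)/2) :=
            Real.rpow_le_rpow_of_nonpos (by positivity) (by nlinarith) (by linarith)
        _ = u ^ (-(1+ρ)) := by rw [sq_rpow_aux hu0.le]; ring_nf
    have hint : IntegrableOn base (Set.Ioi 0) := by
      rw [← Set.Ioc_union_Ioi_eq_Ioi hv0.le]
      exact hint_Ioc.union hint_Ioi
    -- compare with the integral of `16^((1-ρ)/2) * base` on `Ioi 0`
    have step1 : (∫ u in Set.Ioi (κ * v),
          (u ^ 2 + v ^ 2) ^ (-(1 + ρ) / 2) *
            ((u - Real.sqrt 3 / 2) ^ 2 + (v - 1 / 2) ^ 2) ^ (-(1 - ρ) / 2))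
        ≤ ∫ u in Set.Ioi (κ * v), base u * (16 : ℝ) ^ ((1 - ρ) / 2) := by
      refine integral_mono_of_nonneg ?_ ((hint.mono_set
        (Set.Ioi_subset_Ioi (by positivity))).mul_const _) ?_
      · filter_upwards with u; positivity
      · filter_upwards with u using inner_pt_bound hρ1 hv u
    have step2 : (∫ u in Set.Ioi (κ * v), base u * (16 : ℝ) ^ ((1 - ρ) / 2))
        ≤ ∫ u in Set.Ioi (0:ℝ), base u * (16 : ℝ) ^ ((1 - ρ) / 2) := by
      refine setIntegral_mono_set (hint.mul_const _) ?_ ?_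
      · filter_upwards with u; positivity
      · exact HasSubset.Subset.eventuallyLE (Set.Ioi_subset_Ioi (by positivity))
    -- compute/bound the integral of base over Ioi 0
    have split : (∫ u in Set.Ioi (0:ℝ), base u)
        = (∫ u in Set.Ioc 0 v, base u) + ∫ u in Set.Ioi v, base u := by
      rw [← setIntegral_union (Set.Ioc_disjoint_Ioi le_rfl) measurableSet_Ioi
        hint_Ioc hint_Ioi, Set.Ioc_union_Ioi_eq_Ioi hv0.le]
    have part1 : (∫ u in Set.Ioc 0 v, base u) ≤ v ^ (-ρ) := by
      have : (∫ u in Set.Ioc 0 v, base u) ≤ ∫ _ in Set.Ioc 0 v, v ^ (-(1+ρ)) := by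
        refine integral_mono_of_nonneg ?_ (integrableOn_const (by
          simp [Real.volume_Ioc])) ?_
        · filter_upwards with u; positivity
        · filter_upwards [ae_restrict_mem measurableSet_Ioc] with u hu
          calc base u ≤ (v^2) ^ (-(1+ρ)/2) :=
              Real.rpow_le_rpow_of_nonpos (by positivity) (by nlinarith [hu.1.le])
                (by linarith)
            _ = v ^ (-(1+ρ)) := by rw [sq_rpow_aux hv0.le]; ring_nf
      refine this.trans (le_of_eq ?_)
      rw [setIntegral_const, measureReal_def, Real.volume_Ioc, ENNReal.toReal_ofReal (by linarith),
        smul_eq_mul, sub_zero]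
      rw [show v * v ^ (-(1+ρ)) = v ^ (1:ℝ) * v ^ (-(1+ρ)) from by rw [Real.rpow_one],
        ← Real.rpow_add hv0]
      norm_num
    have part2 : (∫ u in Set.Ioi v, base u) ≤ v ^ (-ρ) / ρ := by
      have hmono : (∫ u in Set.Ioi v, base u) ≤ ∫ u in Set.Ioi v, u ^ (-(1+ρ)) := by
        refine integral_mono_of_nonneg ?_ (integrableOn_Ioi_rpow_of_lt (by linarith) hv0) ?_
        · filter_upwards with u; positivity
        · filter_upwards [ae_restrict_mem measurableSet_Ioi] with u hu
          have hu0 : 0 < u := hv0.trans hu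
          calc base u ≤ (u^2) ^ (-(1+ρ)/2) :=
              Real.rpow_le_rpow_of_nonpos (by positivity) (by nlinarith) (by linarith)
            _ = u ^ (-(1+ρ)) := by rw [sq_rpow_aux hu0.le]; ring_nf
      refine hmono.trans ?_
      rw [integral_Ioi_rpow_of_lt (by linarith) hv0]
      have : -(1+ρ) + 1 = -ρ := by ring
      rw [this, neg_div_neg_eq]
    have final : (∫ u in Set.Ioi (0:ℝ), base u * (16 : ℝ) ^ ((1 - ρ) / 2)) ≤ K * v ^ (-ρ) := by
      rw [integral_mul_const, split, hK]
      have h16 : (0:ℝ) < (16 : ℝ) ^ ((1 - ρ) / 2) := by positivity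
      calc ((∫ u in Set.Ioc 0 v, base u) + ∫ u in Set.Ioi v, base u) * (16:ℝ) ^ ((1-ρ)/2)
          ≤ (v ^ (-ρ) + v ^ (-ρ) / ρ) * (16:ℝ) ^ ((1-ρ)/2) := by
            apply mul_le_mul_of_nonneg_right (add_le_add part1 part2) h16.le
        _ = (16:ℝ) ^ ((1-ρ)/2) * (1 + 1/ρ) * v ^ (-ρ) := by field_simp
    exact (step1.trans step2).trans final
  -- Step 2: the outer integral.
  have hmaj : IntegrableOn (fun v : ℝ => Real.exp (-(c * t * v)) * (K * v ^ (-ρ)))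
      (Set.Ioo (0:ℝ) (1/4)) := by
    have h0 : IntegrableOn (fun v : ℝ => v ^ (-ρ) * Real.exp (-b * v ^ (1:ℝ)))
        (Set.Ioi (0:ℝ)) :=
      integrableOn_rpow_mul_exp_neg_mul_rpow (by linarith) one_pos hbpos
    have h1 : IntegrableOn (fun v : ℝ => Real.exp (-(c * t * v)) * (K * v ^ (-ρ)))
        (Set.Ioi (0:ℝ)) := by
      refine MeasureTheory.IntegrableOn.congr_fun (h0.const_mul K)
        (fun v hv => ?_) measurableSet_Ioi
      simp only [Real.rpow_one]
      rw [hb]; ring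
    exact h1.mono_set Set.Ioo_subset_Ioi_self
  have outer1 : (∫ v in Set.Ioo (0 : ℝ) (1 / 4), Real.exp (-(c * t * v)) *
          ∫ u in Set.Ioi (κ * v),
            (u ^ 2 + v ^ 2) ^ (-(1 + ρ) / 2) *
              ((u - Real.sqrt 3 / 2) ^ 2 + (v - 1 / 2) ^ 2) ^ (-(1 - ρ) / 2))
      ≤ ∫ v in Set.Ioo (0 : ℝ) (1/4), Real.exp (-(c * t * v)) * (K * v ^ (-ρ)) := by
    refine integral_mono_of_nonneg ?_ hmaj ?_
    · filter_upwards with v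
      refine mul_nonneg (Real.exp_nonneg _) (integral_nonneg fun u => by positivity)
    · filter_upwards [ae_restrict_mem measurableSet_Ioo] with v hv
      exact mul_le_mul_of_nonneg_left (inner_bound v hv) (Real.exp_nonneg _)
  have outer2 : (∫ v in Set.Ioo (0 : ℝ) (1/4), Real.exp (-(c * t * v)) * (K * v ^ (-ρ)))
      ≤ ∫ v in Set.Ioi (0:ℝ), Real.exp (-(c * t * v)) * (K * v ^ (-ρ)) := by
    refine setIntegral_mono_set ?_ ?_ ?_
    · have h0 : IntegrableOn (fun v : ℝ => v ^ (-ρ) * Real.exp (-b * v ^ (1:ℝ)))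
          (Set.Ioi (0:ℝ)) :=
        integrableOn_rpow_mul_exp_neg_mul_rpow (by linarith) one_pos hbpos
      refine MeasureTheory.IntegrableOn.congr_fun (h0.const_mul K)
        (fun v hv => ?_) measurableSet_Ioi
      simp only [Real.rpow_one]
      rw [hb]; ring
    · filter_upwards [ae_restrict_mem measurableSet_Ioi] with v hv
      exact mul_nonneg (Real.exp_nonneg _)
        (mul_nonneg hKpos.le (Real.rpow_nonneg (le_of_lt hv) _))
    · exact HasSubset.Subset.eventuallyLE Set.Ioo_subset_Ioi_self
  have outer3 : (∫ v in Set.Ioi (0:ℝ), Real.exp (-(c * t * v)) * (K * v ^ (-ρ)))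
      = K * Real.Gamma (1 - ρ) * (c * t) ^ (ρ - 1) := by
    have hcongr : (∫ v in Set.Ioi (0:ℝ), Real.exp (-(c * t * v)) * (K * v ^ (-ρ)))
        = K * ∫ v in Set.Ioi (0:ℝ), v ^ ((1 - ρ) - 1) * Real.exp (-(b * v)) := by
      rw [← integral_const_mul]
      refine setIntegral_congr_fun measurableSet_Ioi (fun v hv => ?_)
      have : (1 - ρ) - 1 = -ρ := by ring
      rw [this, hb]; ring
    have hpow : (1/b) ^ (1-ρ) = b ^ (ρ-1) := by
      rw [one_div, Real.inv_rpow hbpos.le, ← Real.rpow_neg hbpos.le, neg_sub]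
    rw [hcongr, Real.integral_rpow_mul_exp_neg_mul_Ioi (by linarith) hbpos, hpow, hb]
    ring
  calc _ ≤ ∫ v in Set.Ioo (0 : ℝ) (1/4), Real.exp (-(c * t * v)) * (K * v ^ (-ρ)) := outer1
    _ ≤ ∫ v in Set.Ioi (0:ℝ), Real.exp (-(c * t * v)) * (K * v ^ (-ρ)) := outer2
    _ = K * Real.Gamma (1 - ρ) * (c * t) ^ (ρ - 1) := outer3
end

section
/- For every real a > 0, ∫₀^∞ ( ∫_v^∞ e^{−2 a v u} du )^{1/2} dv = 2^{−3/2} · Γ(1/4) · a^{−3/4}, where Γ denotes the Gamma function. In particular this quantity is O(a^{−3/4}) as a → ∞. -/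
open MeasureTheory

lemma inner_int (c v : ℝ) (hc : 0 < c) :
    (∫ u in Set.Ioi v, Real.exp (-(c * u))) = c⁻¹ * Real.exp (-(c * v)) := by
  have := integral_comp_mul_left_Ioi (fun x => Real.exp (-x)) v hc
  simpa [smul_eq_mul, integral_exp_neg_Ioi, integral_exp_Iic] using this

lemma key (a : ℝ) (ha : 0 < a) :
    (∫ v in Set.Ioi (0 : ℝ),
        (∫ u in Set.Ioi v, Real.exp (-(2 * a * v * u))) ^ ((1 : ℝ) / 2))
      = 2 ^ (-(3 : ℝ) / 2) * Real.Gamma (1 / 4) * a ^ (-(3 : ℝ) / 4) := by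
  have h1 : (∫ v in Set.Ioi (0 : ℝ),
        (∫ u in Set.Ioi v, Real.exp (-(2 * a * v * u))) ^ ((1 : ℝ) / 2))
      = ∫ v in Set.Ioi (0 : ℝ),
        (2 * a) ^ (-(1 : ℝ) / 2) * (v ^ (-(1 : ℝ) / 2) * Real.exp (-a * v ^ (2 : ℝ))) := by
    refine setIntegral_congr_fun measurableSet_Ioi (fun v hv => ?_)
    have hv : (0 : ℝ) < v := hv
    have hc : 0 < 2 * a * v := by positivity
    have : (∫ u in Set.Ioi v, Real.exp (-(2 * a * v * u)))
        = (2 * a * v)⁻¹ * Real.exp (-(2 * a * v * v)) := by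
      have := inner_int (2 * a * v) v hc
      simpa [mul_assoc] using this
    rw [this]
    rw [Real.mul_rpow (by positivity) (Real.exp_pos _).le]
    have h2 : ((2 * a * v)⁻¹ : ℝ) ^ ((1 : ℝ) / 2)
        = (2 * a) ^ (-(1 : ℝ) / 2) * v ^ (-(1 : ℝ) / 2) := by
      rw [← Real.rpow_neg_one, ← Real.rpow_mul (by positivity),
        Real.mul_rpow (by positivity) hv.le]
      norm_num
    have h3 : Real.exp (-(2 * a * v * v)) ^ ((1 : ℝ) / 2)
        = Real.exp (-a * v ^ (2 : ℝ)) := by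
      rw [← Real.exp_log (Real.rpow_pos_of_pos (Real.exp_pos _) _),
        Real.log_rpow (Real.exp_pos _), Real.log_exp, Real.rpow_two]
      ring_nf
    rw [h2, h3]; ring
  rw [h1, integral_const_mul,
    integral_rpow_mul_exp_neg_mul_rpow (by norm_num) (by norm_num) ha]
  rw [Real.mul_rpow (by norm_num) ha.le]
  rw [show (-(-1 / 2 + 1) / 2 : ℝ) = -(1 : ℝ)/4 by norm_num,
    show (-1 / 2 + 1) / 2 = (1 : ℝ) / 4 by norm_num]
  have ha2 : a ^ (-(1 : ℝ) / 2) * a ^ (-(1 : ℝ) / 4) = a ^ (-(3 : ℝ) / 4) := by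
    rw [← Real.rpow_add ha]; norm_num
  have h22 : (2 : ℝ) ^ (-(1 : ℝ) / 2) * (1 / 2) = 2 ^ (-(3 : ℝ) / 2) := by
    rw [show ((1 : ℝ) / 2) = (2 : ℝ) ^ (-(1 : ℝ)) by norm_num [Real.rpow_neg_one],
      ← Real.rpow_add two_pos]
    norm_num
  rw [← ha2, ← h22]; ring

/-- The key `O(t^{−3/4})` computation:
`∫₀^∞ (∫_v^∞ e^{−2avu} du)^{1/2} dv = 2^{−3/2} Γ(1/4) a^{−3/4}` for every `a > 0`;
in particular this quantity is `O(a^{−3/4})` as `a → ∞`. -/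
theorem stmt_19 :
    (∀ a : ℝ, 0 < a →
      (∫ v in Set.Ioi (0 : ℝ),
          (∫ u in Set.Ioi v, Real.exp (-(2 * a * v * u))) ^ ((1 : ℝ) / 2))
        = 2 ^ (-(3 : ℝ) / 2) * Real.Gamma (1 / 4) * a ^ (-(3 : ℝ) / 4)) ∧
    Asymptotics.IsBigO Filter.atTop
      (fun a : ℝ => ∫ v in Set.Ioi (0 : ℝ),
          (∫ u in Set.Ioi v, Real.exp (-(2 * a * v * u))) ^ ((1 : ℝ) / 2))
      (fun a : ℝ => a ^ (-(3 : ℝ) / 4)) := by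
  refine ⟨key, ?_⟩
  have heq : (fun a : ℝ => ∫ v in Set.Ioi (0 : ℝ),
        (∫ u in Set.Ioi v, Real.exp (-(2 * a * v * u))) ^ ((1 : ℝ) / 2))
      =ᶠ[Filter.atTop] fun a : ℝ =>
        2 ^ (-(3 : ℝ) / 2) * Real.Gamma (1 / 4) * a ^ (-(3 : ℝ) / 4) := by
    filter_upwards [Filter.eventually_gt_atTop 0] with a ha using key a ha
  exact heq.trans_isBigO ((Asymptotics.isBigO_refl _ _).const_mul_left _)
end
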